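/- arXiv:2010.13529 — 2 statements merged into one kernel-verified Lean document; each statement's English description precedes it below -/
import Mathlib

section
/- Suppose a function L : ℕ → ℝ satisfies α₁·c_k ≤ L(k) ≤ α₂·c_k for all k, where c_k ≥ 0, α₁ ≥ 0, α₂ > 0, and L(k+1) − L(k) ≤ −β·c_k + δ_k with 0 < β < α₂ and δ_k ≥ 0 non-increasing. Then with σ = (α₂ − β)/α₂ ∈ (0,1), for all k ≥ 0: c_k ≤ (α₂/α₁) · σ^k · c_0 + (1/α₁)·∑_{ι=0}^{k−1} σ^{k−ι−1} δ_ι, provided α₁ > 0. -/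
/-! Since `L ≤ α₂ c`, the decrease `-β c` is at least `-(β / α₂) L`, so `L` obeys the linear
recursion `L (k + 1) ≤ σ L k + δ k`. Unrolling it (discrete Grönwall) and using the lower bound
`α₁ c k ≤ L k` at time `k` and the upper bound `L 0 ≤ α₂ c 0` at time `0` gives the estimate. -/

open Finset

theorem le_pow_mul_add_sum_of_le_mul_add {R : Type*} [CommSemiring R] [PartialOrder R]
    [IsOrderedRing R] {u b : ℕ → R} {σ : R} (hσ : 0 ≤ σ)
    (hu : ∀ n, u (n + 1) ≤ σ * u n + b n) (n : ℕ) :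
    u n ≤ σ ^ n * u 0 + ∑ k ∈ range n, σ ^ (n - k - 1) * b k := by
  have h := discrete_gronwall_prod_general (c := fun _ => σ) (n₀ := 0)
    (fun n _ => hu n) (fun _ _ => hσ) (Nat.zero_le n)
  simp only [prod_const, Nat.card_Ico, ← range_eq_Ico, card_range] at h
  calc u n ≤ u 0 * σ ^ n + ∑ k ∈ range n, b k * σ ^ (n - (k + 1)) := h
    _ = σ ^ n * u 0 + ∑ k ∈ range n, σ ^ (n - k - 1) * b k := by
      simp only [Nat.sub_sub, mul_comm]

theorem lyapunov_contraction {K : Type*} [Field K] [LinearOrder K] [IsStrictOrderedRing K]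
    {L₀ L₁ c δ α₂ β : K} (hα₂ : 0 < α₂) (hβ : 0 ≤ β) (hbound : L₀ ≤ α₂ * c)
    (hdec : L₁ - L₀ ≤ -β * c + δ) :
    L₁ ≤ (α₂ - β) / α₂ * L₀ + δ := by
  have hβc : β / α₂ * L₀ ≤ β * c := by
    calc β / α₂ * L₀ ≤ β / α₂ * (α₂ * c) := by gcongr
      _ = β * c := by field_simp
  have hσ : (α₂ - β) / α₂ * L₀ = L₀ - β / α₂ * L₀ := by field_simp
  linarith

theorem lyapunov_exponential_bound_general (L c δ : ℕ → ℝ) (α₁ α₂ β : ℝ)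
    (hα₁ : 0 < α₁) (hα₂ : 0 < α₂)
    (hβ0 : 0 < β) (hβα : β < α₂)
    (hsand : ∀ k, α₁ * c k ≤ L k ∧ L k ≤ α₂ * c k)
    (hdec : ∀ k, L (k + 1) - L k ≤ -β * c k + δ k) :
    0 < (α₂ - β) / α₂ ∧ (α₂ - β) / α₂ < 1 ∧
      ∀ k : ℕ, c k ≤ (α₂ / α₁) * ((α₂ - β) / α₂) ^ k * c 0 +
        (1 / α₁) * ∑ ι ∈ Finset.range k, ((α₂ - β) / α₂) ^ (k - ι - 1) * δ ι := by
  set σ := (α₂ - β) / α₂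
  have hσ0 : 0 < σ := div_pos (sub_pos.2 hβα) hα₂
  refine ⟨hσ0, (div_lt_one hα₂).2 (by linarith), fun k => ?_⟩
  set S := ∑ ι ∈ range k, σ ^ (k - ι - 1) * δ ι
  have hL : L k ≤ σ ^ k * L 0 + S := le_pow_mul_add_sum_of_le_mul_add hσ0.le
    (fun n => lyapunov_contraction hα₂ hβ0.le (hsand n).2 (hdec n)) k
  have hL0 : σ ^ k * L 0 ≤ σ ^ k * (α₂ * c 0) := by gcongr; exact (hsand 0).2
  calc c k = α₁ * c k / α₁ := by field_simp
    _ ≤ (σ ^ k * (α₂ * c 0) + S) / α₁ := by gcongr; linarith [(hsand k).1]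
    _ = (α₂ / α₁) * σ ^ k * c 0 + (1 / α₁) * S := by field_simp

theorem lyapunov_exponential_bound (L c δ : ℕ → ℝ) (α₁ α₂ β : ℝ)
    (hc : ∀ k, 0 ≤ c k) (hα₁ : 0 < α₁) (hα₂ : 0 < α₂)
    (hβ0 : 0 < β) (hβα : β < α₂)
    (hsand : ∀ k, α₁ * c k ≤ L k ∧ L k ≤ α₂ * c k)
    (hδ : ∀ k, 0 ≤ δ k) (hδmono : ∀ k, δ (k + 1) ≤ δ k)
    (hdec : ∀ k, L (k + 1) - L k ≤ -β * c k + δ k) :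
    0 < (α₂ - β) / α₂ ∧ (α₂ - β) / α₂ < 1 ∧
      ∀ k : ℕ, c k ≤ (α₂ / α₁) * ((α₂ - β) / α₂) ^ k * c 0 +
        (1 / α₁) * ∑ ι ∈ Finset.range k, ((α₂ - β) / α₂) ^ (k - ι - 1) * δ ι :=
  lyapunov_exponential_bound_general L c δ α₁ α₂ β hα₁ hα₂ hβ0 hβα hsand hdec
end

section
/- Let S, A be finite sets, γ ∈ [0,1), c : S × A → ℝ bounded, P a transition kernel, and π_old, π_new policies with value functions defined via the soft Bellman equations. If for all s ∈ S: E_{a∼π_new}[α·ln π_new(a|s) + Q_{π_old}(s,a)] ≤ E_{a∼π_old}[α·ln π_old(a|s) + Q_{π_old}(s,a)], then Q_{π_new}(s,a) ≤ Q_{π_old}(s,a) for all (s,a). -/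
/-!
Let `M` be the largest gap `Qnew s a - Qold s a`. Averaging the gaps under `πnew` and using the
improvement hypothesis bounds every value gap `Vnew s - Vold s` by `M`; one more Bellman step
through the stochastic kernel `P` and the discount then gives `M ≤ γ * M`, hence `M ≤ 0`.
-/

open Finset Real

lemma sum_mul_le_of_forall_le {ι : Type*} {s : Finset ι} {w f : ι → ℝ} {M : ℝ}
    (hw : ∀ i ∈ s, 0 ≤ w i) (hw1 : ∑ i ∈ s, w i = 1) (hf : ∀ i ∈ s, f i ≤ M) :
    ∑ i ∈ s, w i * f i ≤ M :=
  calc ∑ i ∈ s, w i * f i ≤ ∑ i ∈ s, w i * M :=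
        sum_le_sum fun i hi => mul_le_mul_of_nonneg_left (hf i hi) (hw i hi)
    _ = M := by rw [← sum_mul, hw1, one_mul]

lemma nonpos_of_forall_le_mul_bound {ι : Type*} [Finite ι] {d : ι → ℝ} {γ : ℝ} (hγ : γ < 1)
    (h : ∀ M, (∀ i, d i ≤ M) → ∀ i, d i ≤ γ * M) (i : ι) : d i ≤ 0 := by
  have : Nonempty ι := ⟨i⟩
  obtain ⟨j, hj⟩ := Finite.exists_max d
  have hjj : d j ≤ γ * d j := h (d j) hj j
  nlinarith [hj i]

lemma soft_value_sub_le {A : Type*} [Fintype A] {α : ℝ} {πo πn Qo Qn : A → ℝ}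
    (himp : ∑ a, πn a * (α * log (πn a) + Qo a) ≤ ∑ a, πo a * (α * log (πo a) + Qo a)) :
    ∑ a, πn a * (Qn a + α * log (πn a)) - ∑ a, πo a * (Qo a + α * log (πo a)) ≤
      ∑ a, πn a * (Qn a - Qo a) := by
  have hsplit : ∑ a, πn a * (Qn a + α * log (πn a)) =
      ∑ a, πn a * (Qn a - Qo a) + ∑ a, πn a * (α * log (πn a) + Qo a) := by
    rw [← sum_add_distrib]
    exact sum_congr rfl fun a _ => by ring
  have hold : ∑ a, πo a * (Qo a + α * log (πo a)) = ∑ a, πo a * (α * log (πo a) + Qo a) :=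
    sum_congr rfl fun a _ => by ring
  linarith

theorem policy_improvement_general {S A : Type*} [Fintype S] [Fintype A]
    (c : S → A → ℝ) (γ : ℝ) (hγ0 : 0 ≤ γ) (hγ1 : γ < 1)
    (α : ℝ)
    (P : S → A → S → ℝ) (hPnn : ∀ s a s', 0 ≤ P s a s')
    (hPsum : ∀ s a, ∑ s', P s a s' = 1)
    (πold πnew : S → A → ℝ)
    (hπnewnn : ∀ s a, 0 ≤ πnew s a) (hπnewsum : ∀ s, ∑ a, πnew s a = 1)
    (Qold Qnew : S → A → ℝ) (Vold Vnew : S → ℝ)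
    (hVold : ∀ s, Vold s = ∑ a, πold s a * (Qold s a + α * Real.log (πold s a)))
    (hQold : ∀ s a, Qold s a = c s a + γ * ∑ s', P s a s' * Vold s')
    (hVnew : ∀ s, Vnew s = ∑ a, πnew s a * (Qnew s a + α * Real.log (πnew s a)))
    (hQnew : ∀ s a, Qnew s a = c s a + γ * ∑ s', P s a s' * Vnew s')
    (himp : ∀ s, ∑ a, πnew s a * (α * Real.log (πnew s a) + Qold s a) ≤
                 ∑ a, πold s a * (α * Real.log (πold s a) + Qold s a)) :
    ∀ s a, Qnew s a ≤ Qold s a := by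
  have hV : ∀ M, (∀ s a, Qnew s a - Qold s a ≤ M) → ∀ s, Vnew s - Vold s ≤ M := by
    intro M hM s
    calc Vnew s - Vold s ≤ ∑ a, πnew s a * (Qnew s a - Qold s a) := by
          rw [hVnew, hVold]; exact soft_value_sub_le (himp s)
      _ ≤ M := sum_mul_le_of_forall_le (fun a _ => hπnewnn s a) (hπnewsum s) fun a _ => hM s a
  have hQ : ∀ M, (∀ s a, Qnew s a - Qold s a ≤ M) → ∀ s a, Qnew s a - Qold s a ≤ γ * M := by
    intro M hM s a
    calc Qnew s a - Qold s a = γ * ∑ s', P s a s' * (Vnew s' - Vold s') := by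
          simp only [hQnew s a, hQold s a, mul_sub, sum_sub_distrib]; ring
      _ ≤ γ * M := mul_le_mul_of_nonneg_left
          (sum_mul_le_of_forall_le (fun s' _ => hPnn s a s') (hPsum s a) fun s' _ => hV M hM s')
          hγ0
  intro s a
  exact sub_nonpos.mp <|
    nonpos_of_forall_le_mul_bound (d := fun p : S × A => Qnew p.1 p.2 - Qold p.1 p.2) hγ1
      (fun M hM p => hQ M (fun s a => hM (s, a)) p.1 p.2) (s, a)

theorem policy_improvement {S A : Type*} [Fintype S] [Fintype A]
    (c : S → A → ℝ) (γ : ℝ) (hγ0 : 0 ≤ γ) (hγ1 : γ < 1)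
    (C : ℝ) (hc : ∀ s a, |c s a| ≤ C) (α : ℝ) (hα : 0 ≤ α)
    (P : S → A → S → ℝ) (hPnn : ∀ s a s', 0 ≤ P s a s')
    (hPsum : ∀ s a, ∑ s', P s a s' = 1)
    (πold πnew : S → A → ℝ)
    (hπoldnn : ∀ s a, 0 ≤ πold s a) (hπoldsum : ∀ s, ∑ a, πold s a = 1)
    (hπnewnn : ∀ s a, 0 ≤ πnew s a) (hπnewsum : ∀ s, ∑ a, πnew s a = 1)
    (Qold Qnew : S → A → ℝ) (Vold Vnew : S → ℝ)
    (hVold : ∀ s, Vold s = ∑ a, πold s a * (Qold s a + α * Real.log (πold s a)))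
    (hQold : ∀ s a, Qold s a = c s a + γ * ∑ s', P s a s' * Vold s')
    (hVnew : ∀ s, Vnew s = ∑ a, πnew s a * (Qnew s a + α * Real.log (πnew s a)))
    (hQnew : ∀ s a, Qnew s a = c s a + γ * ∑ s', P s a s' * Vnew s')
    (himp : ∀ s, ∑ a, πnew s a * (α * Real.log (πnew s a) + Qold s a) ≤
                 ∑ a, πold s a * (α * Real.log (πold s a) + Qold s a)) :
    ∀ s a, Qnew s a ≤ Qold s a :=
  policy_improvement_general c γ hγ0 hγ1 α P hPnn hPsum πold πnew hπnewnn hπnewsum Qold Qnew Vold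
    Vnew hVold hQold hVnew hQnew himp
end
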